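/- If every block in the union X ∪ Y is clear in state s (i.e., the concept N of non-clear blocks among X ∪ Y is empty) and the gripper is empty, then in the Blocksworld the subgoal on(x,y) for the unique x ∈ X and y ∈ Y is achievable in exactly two actions: Pickup(x) or Unstack(x,z) followed by Stack(x,y); hence the corresponding subproblem has width 0 under the policy rules r11–r13. -/
import Mathlib


/-- Location of a block: on another block, on the table, or held by the gripper. -/
inductive Loc (Block : Type) where
  | on (b : Block)
  | table
  | held
deriving DecidableEq

/-- A Blocksworld state: the location of every block. -/
structure BWState (Block : Type) where
  loc : Block → Loc Block

variable {Block : Type} [DecidableEq Block]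

/-- A block is clear: no block is on it and it is not held. -/
def Clear (s : BWState Block) (b : Block) : Prop :=
  (∀ z : Block, s.loc z ≠ Loc.on b) ∧ s.loc b ≠ Loc.held

/-- The gripper is empty. -/
def GripperEmpty (s : BWState Block) : Prop := ∀ z : Block, s.loc z ≠ Loc.held

def PickupStep (s s' : BWState Block) (x : Block) : Prop :=
  Clear s x ∧ s.loc x = Loc.table ∧ GripperEmpty s ∧
  s'.loc = Function.update s.loc x Loc.held

def UnstackStep (s s' : BWState Block) (x z : Block) : Prop :=
  Clear s x ∧ s.loc x = Loc.on z ∧ GripperEmpty s ∧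
  s'.loc = Function.update s.loc x Loc.held

def PutdownStep (s s' : BWState Block) (x : Block) : Prop :=
  s.loc x = Loc.held ∧ s'.loc = Function.update s.loc x Loc.table

def StackStep (s s' : BWState Block) (x y : Block) : Prop :=
  s.loc x = Loc.held ∧ Clear s y ∧ s'.loc = Function.update s.loc x (Loc.on y)

/-- Any single Blocksworld action. -/
def AnyStep (s s' : BWState Block) : Prop :=
  (∃ x, PickupStep s s' x) ∨ (∃ x z, UnstackStep s s' x z) ∨
  (∃ x, PutdownStep s s' x) ∨ (∃ x y, StackStep s s' x y)

/-- if every block in X ∪ Y = {x, y} is clear in `s` (the concept N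
of non-clear blocks among X ∪ Y is empty) and the gripper is empty, then the
subgoal `on(x,y)` is achievable in exactly two actions: `Pickup(x)` or
`Unstack(x,z)` (rules r11/r12) followed by `Stack(x,y)` (rule r13) — and it is
not achievable in fewer actions, so each rule application is a single forced
state transition and the subproblem has width 0. -/
theorem stmt9 [DecidableEq Block] (s : BWState Block) (x y : Block)
    (hxy : x ≠ y) (hcx : Clear s x) (hcy : Clear s y) (hg : GripperEmpty s)
    (hnot : s.loc x ≠ Loc.on y) :
    (∃ s1 s2 : BWState Block,
      ((s.loc x = Loc.table ∧ PickupStep s s1 x) ∨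
        (∃ z, s.loc x = Loc.on z ∧ UnstackStep s s1 x z)) ∧
      StackStep s1 s2 x y ∧ s2.loc x = Loc.on y) ∧
    (∀ s1 : BWState Block, AnyStep s s1 → s1.loc x ≠ Loc.on y) := by
  constructor
  · refine ⟨⟨Function.update s.loc x Loc.held⟩,
      ⟨Function.update (Function.update s.loc x Loc.held) x (Loc.on y)⟩, ?_, ?_, ?_⟩
    · rcases h : s.loc x with z | _ | _
      · exact Or.inr ⟨z, rfl, hcx, h, hg, rfl⟩
      · exact Or.inl ⟨rfl, hcx, h, hg, rfl⟩
      · exact absurd h (hg x)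
    · refine ⟨by simp, ⟨?_, ?_⟩, rfl⟩
      · intro z
        by_cases hz : z = x <;> simp [hz, Function.update, hcy.1 z]
      · show Function.update s.loc x Loc.held y ≠ Loc.held
        rw [Function.update_of_ne (Ne.symm hxy)]; exact hcy.2
    · simp
  · rintro s1 (⟨a, hca, hta, hga, hup⟩ | ⟨a, z, hca, hoa, hga, hup⟩ |
      ⟨a, hha, hup⟩ | ⟨a, b, hha, hcb, hup⟩) hgoal
    · rw [hup] at hgoal
      by_cases hax : a = x
      · subst hax; simp at hgoal
      · rw [Function.update_of_ne (fun h => hax h.symm)] at hgoal; exact hnot hgoal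
    · rw [hup] at hgoal
      by_cases hax : a = x
      · subst hax; simp at hgoal
      · rw [Function.update_of_ne (fun h => hax h.symm)] at hgoal; exact hnot hgoal
    · exact hg a hha
    · exact hg a hha
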